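/- arXiv:2404.08323 — 2 statements merged into one kernel-verified Lean document; each statement's English description precedes it below -/
import Mathlib

section
/- Let g be analytic on the unit disc with g' bounded on a Carleson box S(I) (I an arc of the circle centered at a with |I| ≤ 2δ), and suppose g' (1-|z|²)^{1/2} induces a Carleson measure (g ∈ BMOA). Then the measure dμ(z) = |g'(z)|²/|z-a|² · (1-|z|²) dA(z) is a Carleson measure on the unit disc. -/
open Complex MeasureTheory

/-- The Carleson box `S(I)` over the arc of length `ℓ` centered at `a ∈ ∂𝔻`. -/
def carlesonBox (a : ℂ) (ℓ : ℝ) : Set ℂ :=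
  {z : ℂ | 1 - ℓ < ‖z‖ ∧ ‖z‖ < 1 ∧
    |Complex.arg (z * (starRingEnd ℂ) a)| ≤ ℓ / 2}

/-- A nonnegative weight `w` on the disc induces a Carleson measure `w dA` if
`∫_{S(I)} w ≲ |I|` for all arcs `I`. -/
def IsCarlesonWeight (w : ℂ → ℝ) : Prop :=
  ∃ C : ℝ, ∀ a : ℂ, ‖a‖ = 1 → ∀ ℓ : ℝ, 0 < ℓ → ℓ ≤ 1 →
    (∫ z in carlesonBox a ℓ, w z ∂volume) ≤ C * ℓ

/-!
Split the disc along the box `S(I)` over the arc centred at `a`. Inside it `|g'| ≤ C`, so the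
weight is at most `C²` times the Carleson weight `(1 - |z|²) / |z - a|²`. Outside it `|z - a|`
is bounded below by some `c > 0`, so the weight is at most `c⁻²` times the BMOA weight
`|g'|² (1 - |z|²)`. Hence the weight is dominated by a combination of two Carleson weights.
Since a non-integrable function has integral `0`, comparing integrals also needs
`(1 - |z|²) / |z - a|²` to be integrable on the disc; it is, being at most `2 / |z - a|`.
-/

open Set Metric Real

lemma setIntegral_le_add_of_le {α : Type*} [MeasurableSpace α] {μ : Measure α} {s : Set α}
    {w u v : α → ℝ} {p q M : ℝ} (hs : MeasurableSet s) (hp : 0 ≤ p) (hq : 0 ≤ q)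
    (hu : IntegrableOn u s μ) (hv : AEStronglyMeasurable v (μ.restrict s))
    (hu₀ : ∀ x ∈ s, 0 ≤ u x) (hv₀ : ∀ x ∈ s, 0 ≤ v x) (hvw : ∀ x ∈ s, v x ≤ M * w x)
    (hwuv : ∀ x ∈ s, w x ≤ p * u x + q * v x) :
    ∫ x in s, w x ∂μ ≤ p * ∫ x in s, u x ∂μ + q * ∫ x in s, v x ∂μ := by
  -- If `w` is not integrable its integral is the junk value `0`; if it is, `v ≤ M * w` makes `v`
  -- integrable too.
  have hrhs : 0 ≤ p * ∫ x in s, u x ∂μ + q * ∫ x in s, v x ∂μ := by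
    have := setIntegral_nonneg (μ := μ) hs hu₀
    have := setIntegral_nonneg (μ := μ) hs hv₀
    positivity
  by_cases hw : IntegrableOn w s μ
  swap
  · rwa [integral_undef hw]
  have hv' : IntegrableOn v s μ := by
    refine (hw.const_mul M).mono' hv ((ae_restrict_iff' hs).2 (ae_of_all _ fun x hx => ?_))
    rw [Real.norm_of_nonneg (hv₀ x hx)]
    exact hvw x hx
  calc ∫ x in s, w x ∂μ ≤ ∫ x in s, (p * u x + q * v x) ∂μ :=
        setIntegral_mono_on hw ((hu.const_mul p).add (hv'.const_mul q)) hs hwuv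
    _ = p * ∫ x in s, u x ∂μ + q * ∫ x in s, v x ∂μ := by
        rw [integral_add (hu.const_mul p) (hv'.const_mul q), integral_const_mul, integral_const_mul]

lemma locallyIntegrable_inv_norm_sub (a : ℂ) :
    LocallyIntegrable (fun z : ℂ => ‖z - a‖⁻¹) := by
  have h₀ : LocallyIntegrable (fun z : ℂ => ‖z‖⁻¹) :=
    locallyIntegrable_of_norm_le_rpow (C := 1) (α := 1) (by simp) (by simp)
      (ae_of_all _ fun z => by simp [Real.rpow_neg_one])
      continuous_norm.measurable.inv.aestronglyMeasurable
  rw [← map_sub_right_eq_self volume a] at h₀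
  exact (locallyIntegrable_map_homeomorph (Homeomorph.subRight a)).1 h₀

section UnitCircle

variable {a : ℂ}

lemma one_sub_norm_le_norm_sub (ha : ‖a‖ = 1) (z : ℂ) : 1 - ‖z‖ ≤ ‖z - a‖ := by
  simpa [ha, norm_sub_rev] using norm_sub_norm_le a z

lemma norm_sub_pos_of_norm_lt_one (ha : ‖a‖ = 1) {z : ℂ} (hz : ‖z‖ < 1) : 0 < ‖z - a‖ := by
  linarith [one_sub_norm_le_norm_sub ha z]

lemma one_sub_norm_sq_div_le (ha : ‖a‖ = 1) {z : ℂ} (hz : ‖z‖ < 1) :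
    (1 - ‖z‖ ^ 2) / ‖z - a‖ ^ 2 ≤ 2 * ‖z - a‖⁻¹ := by
  have hpos := norm_sub_pos_of_norm_lt_one ha hz
  calc (1 - ‖z‖ ^ 2) / ‖z - a‖ ^ 2 ≤ 2 * ‖z - a‖ / ‖z - a‖ ^ 2 := by
        gcongr
        nlinarith [one_sub_norm_le_norm_sub ha z, norm_nonneg z]
    _ = 2 * ‖z - a‖⁻¹ := by field_simp

lemma integrableOn_ball_one_sub_norm_sq_div (ha : ‖a‖ = 1) :
    IntegrableOn (fun z : ℂ => (1 - ‖z‖ ^ 2) / ‖z - a‖ ^ 2) (ball 0 1) := by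
  have hinv : IntegrableOn (fun z : ℂ => ‖z - a‖⁻¹) (ball 0 1) :=
    ((locallyIntegrable_inv_norm_sub a).integrableOn_isCompact
      (isCompact_closedBall 0 1)).mono_set ball_subset_closedBall
  refine (hinv.const_mul 2).mono' (by fun_prop : Measurable _).aestronglyMeasurable
    ((ae_restrict_iff' measurableSet_ball).2 (ae_of_all _ fun z hz => ?_))
  rw [mem_ball_zero_iff] at hz
  have : 0 ≤ 1 - ‖z‖ ^ 2 := by nlinarith [norm_nonneg z]
  rw [Real.norm_of_nonneg (by positivity)]
  exact one_sub_norm_sq_div_le ha hz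

lemma le_four_mul_div_norm_sub_sq (ha : ‖a‖ = 1) {z : ℂ} (hz : ‖z‖ < 1) {x : ℝ} (hx : 0 ≤ x) :
    x ≤ 4 * (x / ‖z - a‖ ^ 2) := by
  have hpos := norm_sub_pos_of_norm_lt_one ha hz
  have hle : ‖z - a‖ ≤ 2 := (norm_sub_le z a).trans (by linarith)
  have hsq : ‖z - a‖ ^ 2 ≤ 4 := by nlinarith
  rw [mul_div_assoc', le_div_iff₀ (by positivity)]
  nlinarith [mul_le_mul_of_nonneg_left hsq hx]

end UnitCircle

lemma re_le_cos_of_le_abs_arg {w : ℂ} {t : ℝ} (hw : ‖w‖ ≤ 1) (ht₀ : 0 ≤ t) (ht : t ≤ π / 2)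
    (harg : t ≤ |arg w|) : w.re ≤ Real.cos t := by
  have hcos : 0 ≤ Real.cos t := Real.cos_nonneg_of_mem_Icc ⟨by linarith [pi_pos], ht⟩
  calc w.re = ‖w‖ * Real.cos (arg w) := (norm_mul_cos_arg w).symm
    _ ≤ ‖w‖ * Real.cos t := by
        gcongr
        rw [← Real.cos_abs]
        exact Real.cos_le_cos_of_nonneg_of_le_pi ht₀ (abs_arg_le_pi w) harg
    _ ≤ Real.cos t := mul_le_of_le_one_left hcos hw

lemma exists_pos_le_norm_sub_of_notMem_carlesonBox {a : ℂ} (ha : ‖a‖ = 1) {ℓ : ℝ} (hℓ : 0 < ℓ) :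
    ∃ c > 0, ∀ z : ℂ, ‖z‖ < 1 → z ∉ carlesonBox a ℓ → c ≤ ‖z - a‖ := by
  set t := min (ℓ / 2) (π / 2)
  have ht₀ : 0 < t := lt_min (by positivity) (by positivity)
  have hcos : Real.cos t < 1 := by
    simpa using Real.cos_lt_cos_of_nonneg_of_le_pi_div_two le_rfl (min_le_right _ _) ht₀
  refine ⟨min ℓ (1 - Real.cos t), lt_min hℓ (by linarith), fun z hz hzS => ?_⟩
  by_cases hr : ‖z‖ ≤ 1 - ℓ
  · exact (min_le_left _ _).trans (by linarith [one_sub_norm_le_norm_sub ha z])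
  set w := z * (starRingEnd ℂ) a
  have harg : t ≤ |arg w| :=
    (min_le_left _ _).trans (not_le.1 fun h => hzS ⟨not_le.1 hr, hz, h⟩).le
  have hw : ‖w‖ = ‖z‖ := by simp [w, ha]
  have hza : ‖z - a‖ = ‖1 - w‖ := by
    have ha' : a * (starRingEnd ℂ) a = 1 := by
      rw [mul_conj, normSq_eq_norm_sq, ha]; simp
    have : z - a = (w - 1) * a := by linear_combination (-z) * ha'
    rw [this, norm_mul, ha, mul_one, norm_sub_rev]
  calc min ℓ (1 - Real.cos t) ≤ 1 - Real.cos t := min_le_right _ _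
    _ ≤ (1 - w).re := by
        simp only [sub_re, one_re]
        linarith [re_le_cos_of_le_abs_arg (hw.trans_le hz.le) ht₀.le (min_le_right _ _) harg]
    _ ≤ ‖z - a‖ := hza ▸ re_le_norm _

lemma measurableSet_carlesonBox (a : ℂ) (ℓ : ℝ) : MeasurableSet (carlesonBox a ℓ) := by
  simp only [carlesonBox, ofPred_and]
  refine (measurableSet_lt measurable_const measurable_norm).inter
    ((measurableSet_lt measurable_norm measurable_const).inter
      (measurableSet_le (measurable_arg.comp (measurable_mul_const _)).abs measurable_const))

lemma carlesonBox_subset_ball (a : ℂ) (ℓ : ℝ) : carlesonBox a ℓ ⊆ ball 0 1 :=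
  fun _ hz => mem_ball_zero_iff.2 hz.2.1

lemma sq_mul_div_sq_le {x y e c C : ℝ} (hx : 0 ≤ x) (hy : 0 ≤ y) (hc : 0 < c)
    (h : x ≤ C ∨ c ≤ e) :
    x ^ 2 * y / e ^ 2 ≤ C ^ 2 * (y / e ^ 2) + (c ^ 2)⁻¹ * (x ^ 2 * y) := by
  rcases h with hxC | hce
  · have : x ^ 2 * y / e ^ 2 ≤ C ^ 2 * (y / e ^ 2) := by rw [mul_div_assoc]; gcongr
    have : 0 ≤ (c ^ 2)⁻¹ * (x ^ 2 * y) := by positivity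
    linarith
  · have : x ^ 2 * y / e ^ 2 ≤ (c ^ 2)⁻¹ * (x ^ 2 * y) := by rw [inv_mul_eq_div]; gcongr
    have : 0 ≤ C ^ 2 * (y / e ^ 2) := by positivity
    linarith

theorem stmt3_general (g : ℂ → ℂ)
    (a : ℂ) (ha : ‖a‖ = 1) (δ : ℝ) (hδ : 0 < δ) (C : ℝ)
    (hbound : ∀ z ∈ carlesonBox a (2 * δ), ‖deriv g z‖ ≤ C)
    (hBMOA : IsCarlesonWeight
      (fun z => ‖deriv g z‖ ^ 2 * (1 - ‖z‖ ^ 2)))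
    (hlog : IsCarlesonWeight
      (fun z => (1 - ‖z‖ ^ 2) / ‖z - a‖ ^ 2)) :
    IsCarlesonWeight
      (fun z => ‖deriv g z‖ ^ 2 * (1 - ‖z‖ ^ 2)
        / ‖z - a‖ ^ 2) := by
  obtain ⟨CB, hCB⟩ := hBMOA
  obtain ⟨CL, hCL⟩ := hlog
  obtain ⟨c, hc, hfar⟩ :=
    exists_pos_le_norm_sub_of_notMem_carlesonBox ha (by positivity : 0 < 2 * δ)
  refine ⟨C ^ 2 * CL + (c ^ 2)⁻¹ * CB, fun b hb ℓ hℓ hℓ₁ => ?_⟩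
  have hdisc : ∀ z ∈ carlesonBox b ℓ, ‖z‖ < 1 ∧ 0 ≤ 1 - ‖z‖ ^ 2 := fun z hz =>
    ⟨hz.2.1, by nlinarith [hz.2.1, norm_nonneg z]⟩
  calc
    _ ≤ C ^ 2 * (∫ z in carlesonBox b ℓ, (1 - ‖z‖ ^ 2) / ‖z - a‖ ^ 2)
        + (c ^ 2)⁻¹ * ∫ z in carlesonBox b ℓ, ‖deriv g z‖ ^ 2 * (1 - ‖z‖ ^ 2) := by
      refine setIntegral_le_add_of_le (M := 4) (measurableSet_carlesonBox b ℓ) (sq_nonneg C)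
        (by positivity)
        ((integrableOn_ball_one_sub_norm_sq_div ha).mono_set (carlesonBox_subset_ball b ℓ))
        (by fun_prop : Measurable _).aestronglyMeasurable
        (fun z hz => ?_) (fun z hz => ?_) (fun z hz => ?_) (fun z hz => ?_) <;>
        obtain ⟨hz₁, hy⟩ := hdisc z hz
      · positivity
      · positivity
      · exact le_four_mul_div_norm_sub_sq ha hz₁ (by positivity)
      · exact sq_mul_div_sq_le (norm_nonneg _) hy hc
          ((em (z ∈ carlesonBox a (2 * δ))).imp (hbound z) (hfar z hz₁))
    _ ≤ C ^ 2 * (CL * ℓ) + (c ^ 2)⁻¹ * (CB * ℓ) := by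
      gcongr
      exacts [hCL b hb ℓ hℓ hℓ₁, hCB b hb ℓ hℓ hℓ₁]
    _ = (C ^ 2 * CL + (c ^ 2)⁻¹ * CB) * ℓ := by ring

/-- If `g` is analytic on the disc with `g'` bounded on the Carleson box over the arc `I`
centered at `a` of length `2δ`, `|g'|²(1-|z|²)dA` is Carleson (`g ∈ BMOA`), and
`(1-|z|²)/|z-a|² dA` is Carleson, then `|g'(z)|²(1-|z|²)/|z-a|² dA` is a Carleson measure. -/
theorem stmt3 (g : ℂ → ℂ) (hg : DifferentiableOn ℂ g (Metric.ball (0 : ℂ) 1))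
    (a : ℂ) (ha : ‖a‖ = 1) (δ : ℝ) (hδ : 0 < δ) (C : ℝ)
    (hbound : ∀ z ∈ carlesonBox a (2 * δ), ‖deriv g z‖ ≤ C)
    (hBMOA : IsCarlesonWeight
      (fun z => ‖deriv g z‖ ^ 2 * (1 - ‖z‖ ^ 2)))
    (hlog : IsCarlesonWeight
      (fun z => (1 - ‖z‖ ^ 2) / ‖z - a‖ ^ 2)) :
    IsCarlesonWeight
      (fun z => ‖deriv g z‖ ^ 2 * (1 - ‖z‖ ^ 2)
        / ‖z - a‖ ^ 2) :=
  stmt3_general g a ha δ hδ C hbound hBMOA hlog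
end

section
/- For 1 ≤ p₁ < p₂ < ∞ and a ∈ ∂𝔻, the function F(z) = (1-z)^{-1/p₂} belongs to H^{p₁} but not to H^{p₂}; equivalently, sup_{r<1} ∫₀^{2π} |1-re^{iθ}|^{-p₁/p₂} dθ < ∞ while sup_{r<1} ∫₀^{2π} |1-re^{iθ}|^{-1} dθ = ∞. -/
open Complex

/-!
For `‖e‖ = 1` and real `r` one has `‖1 - r e‖² = (1 - r)² + r ‖1 - e‖²`. Hence for `0 ≤ r ≤ 1`,
`‖1 - r e^{iθ}‖` is at least half the chord `‖1 - e^{iθ}‖ = 2 |sin (θ/2)| ≥ 2|θ|/π` (for `|θ| ≤ π`)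
and at most `(1 - r) + |θ|`. By periodicity we integrate over `[-π, π]`, where the lower bound
dominates `‖1 - r e^{iθ}‖^{-α}`, `α = p₁/p₂ < 1`, by the integrable `π^α |θ|^{-α}` uniformly in `r`.
The upper bound gives `∫ ‖1 - r e^{iθ}‖⁻¹ ≥ log ((2π + 1 - r)/(1 - r))`, which tends to `∞` as
`r → 1`.
-/

open scoped Real Topology
open Filter MeasureTheory

section OneSubOfRealMul

variable {e : ℂ} {r : ℝ}

theorem norm_one_sub_ofReal_mul_sq (he : ‖e‖ = 1) :
    ‖1 - r * e‖ ^ 2 = (1 - r) ^ 2 + r * ‖1 - e‖ ^ 2 := by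
  have he' : e.re ^ 2 + e.im ^ 2 = 1 := by
    rw [sq, sq, ← normSq_apply, normSq_eq_norm_sq, he, one_pow]
  simp only [Complex.sq_norm, normSq_apply, sub_re, sub_im, one_re, one_im, mul_re, mul_im,
    ofReal_re, ofReal_im]
  linear_combination r * (r - 1) * he'

theorem norm_one_sub_le_two_mul_norm_one_sub_ofReal_mul (he : ‖e‖ = 1) (hr0 : 0 ≤ r) :
    ‖1 - e‖ ≤ 2 * ‖1 - r * e‖ := by
  have hd : ‖1 - e‖ ≤ 2 := (norm_sub_le _ _).trans (by rw [norm_one, he]; norm_num)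
  rw [← pow_le_pow_iff_left₀ (norm_nonneg _) (by positivity) two_ne_zero, mul_pow,
    norm_one_sub_ofReal_mul_sq he]
  have hd2 : ‖1 - e‖ ^ 2 ≤ 4 := by nlinarith [norm_nonneg (1 - e)]
  rcases le_total (1 / 4) r with hr | hr
  · nlinarith [sq_nonneg (1 - r), sq_nonneg ‖1 - e‖]
  · nlinarith [mul_nonneg (sub_nonneg.2 hr) (sub_nonneg.2 hd2)]

theorem one_sub_le_norm_one_sub_ofReal_mul (he : ‖e‖ ≤ 1) (hr0 : 0 ≤ r) :
    1 - r ≤ ‖1 - r * e‖ := by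
  calc 1 - r ≤ 1 - ‖r * e‖ := by
        rw [norm_mul, norm_real, Real.norm_of_nonneg hr0]
        exact sub_le_sub_left (mul_le_of_le_one_right hr0 he) 1
    _ ≤ ‖1 - r * e‖ := by simpa using norm_sub_norm_le (1 : ℂ) (r * e)

theorem norm_one_sub_ofReal_mul_le (hr0 : 0 ≤ r) (hr1 : r ≤ 1) :
    ‖1 - r * e‖ ≤ 1 - r + ‖1 - e‖ := by
  calc ‖1 - r * e‖ = ‖((1 - r : ℝ) : ℂ) + r * (1 - e)‖ := by push_cast; ring_nf
    _ ≤ (1 - r) + r * ‖1 - e‖ := by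
        refine (norm_add_le _ _).trans_eq ?_
        rw [norm_mul, norm_real, norm_real, Real.norm_of_nonneg hr0,
          Real.norm_of_nonneg (sub_nonneg.2 hr1)]
    _ ≤ 1 - r + ‖1 - e‖ := by gcongr; exact mul_le_of_le_one_left (norm_nonneg _) hr1

end OneSubOfRealMul

section OneSubOfRealMulExp

variable {r θ : ℝ}

theorem abs_div_pi_le_norm_one_sub_ofReal_mul_exp (hr0 : 0 ≤ r) (hθ : |θ| ≤ π) :
    |θ| / π ≤ ‖1 - r * Complex.exp (θ * I)‖ := by
  have hsin : 2 / π * |θ / 2| ≤ |Real.sin (θ / 2)| :=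
    Real.mul_abs_le_abs_sin (by rw [abs_div, abs_two]; linarith)
  have hchord : ‖1 - Complex.exp (θ * I)‖ = 2 * |Real.sin (θ / 2)| := by
    rw [norm_sub_rev, mul_comm, norm_exp_I_mul_ofReal_sub_one, norm_mul, Real.norm_eq_abs,
      Real.norm_eq_abs, abs_two]
  have hhalf := norm_one_sub_le_two_mul_norm_one_sub_ofReal_mul (norm_exp_ofReal_mul_I θ) hr0
  rw [abs_div, abs_two] at hsin
  calc |θ| / π = 2 / π * (|θ| / 2) := by ring
    _ ≤ ‖1 - r * Complex.exp (θ * I)‖ := by linarith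

theorem norm_one_sub_ofReal_mul_exp_le (hr0 : 0 ≤ r) (hr1 : r ≤ 1) :
    ‖1 - r * Complex.exp (θ * I)‖ ≤ 1 - r + |θ| := by
  have hchord : ‖1 - Complex.exp (θ * I)‖ ≤ |θ| := by
    simpa [norm_sub_rev, mul_comm] using Real.norm_exp_I_mul_ofReal_sub_one_le (x := θ)
  linarith [norm_one_sub_ofReal_mul_le (e := Complex.exp (θ * I)) hr0 hr1]

theorem norm_one_sub_ofReal_mul_exp_pos (hr0 : 0 ≤ r) (hr1 : r < 1) :
    0 < ‖1 - r * Complex.exp (θ * I)‖ :=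
  (sub_pos.2 hr1).trans_le <|
    one_sub_le_norm_one_sub_ofReal_mul (norm_exp_ofReal_mul_I θ).le hr0

end OneSubOfRealMulExp

theorem intervalIntegrable_abs_rpow {s : ℝ} (hs : -1 < s) (a b : ℝ) :
    IntervalIntegrable (fun x : ℝ => |x| ^ s) volume a b := by
  have hpos : ∀ c, 0 ≤ c → IntervalIntegrable (fun x : ℝ => |x| ^ s) volume 0 c := fun c hc =>
    (intervalIntegral.intervalIntegrable_rpow' hs).congr fun x hx => by
      rw [Set.uIoc_of_le hc] at hx
      rw [abs_of_pos hx.1]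
  have h0 : ∀ c, IntervalIntegrable (fun x : ℝ => |x| ^ s) volume 0 c := by
    intro c
    rcases le_total 0 c with hc | hc
    · exact hpos c hc
    · simpa using (hpos (-c) (neg_nonneg.2 hc)).comp_sub_left 0
  exact (h0 a).symm.trans (h0 b)

theorem integral_norm_one_sub_ofReal_mul_exp_rpow_neg_le {α r : ℝ} (hα0 : 0 ≤ α) (hα1 : α < 1)
    (hr0 : 0 ≤ r) (hr1 : r < 1) :
    ∫ θ in (0 : ℝ)..2 * π, ‖1 - r * Complex.exp (θ * I)‖ ^ (-α) ≤
      ∫ θ in -π..π, π ^ α * |θ| ^ (-α) := by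
  have hperiodic : Function.Periodic (fun θ : ℝ => ‖1 - r * Complex.exp (θ * I)‖ ^ (-α))
      (2 * π) := fun θ => by
    simp only [ofReal_add, ofReal_mul, ofReal_ofNat, exp_mul_I_periodic θ]
  have hcont : Continuous fun θ : ℝ => ‖1 - r * Complex.exp (θ * I)‖ ^ (-α) :=
    (by fun_prop : Continuous fun θ : ℝ => ‖1 - r * Complex.exp (θ * I)‖).rpow_const
      fun θ => .inl (norm_one_sub_ofReal_mul_exp_pos hr0 hr1).ne'
  rw [show 2 * π = 0 + 2 * π by ring, hperiodic.intervalIntegral_add_eq 0 (-π),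
    show -π + 2 * π = π by ring]
  refine intervalIntegral.integral_mono_ae_restrict (by linarith [Real.pi_pos])
    (hcont.intervalIntegrable _ _) ((intervalIntegrable_abs_rpow (by linarith) _ _).const_mul _) ?_
  filter_upwards [ae_restrict_mem measurableSet_Icc,
    ae_restrict_of_ae (Measure.ae_ne volume 0)] with θ hθ hθ0
  calc ‖1 - r * Complex.exp (θ * I)‖ ^ (-α) ≤ (|θ| / π) ^ (-α) :=
        Real.rpow_le_rpow_of_nonpos (by positivity)
          (abs_div_pi_le_norm_one_sub_ofReal_mul_exp hr0 (abs_le.2 hθ)) (by linarith)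
    _ = π ^ α * |θ| ^ (-α) := by
        rw [Real.div_rpow (abs_nonneg _) Real.pi_pos.le, Real.rpow_neg Real.pi_pos.le,
          div_inv_eq_mul, mul_comm]

theorem log_le_integral_inv_norm_one_sub_ofReal_mul_exp {r : ℝ} (hr0 : 0 ≤ r) (hr1 : r < 1) :
    Real.log ((2 * π + (1 - r)) / (1 - r)) ≤
      ∫ θ in (0 : ℝ)..2 * π, ‖1 - r * Complex.exp (θ * I)‖⁻¹ := by
  have hε : 0 < 1 - r := sub_pos.2 hr1
  calc Real.log ((2 * π + (1 - r)) / (1 - r)) = ∫ θ in (0 : ℝ)..2 * π, (θ + (1 - r))⁻¹ := by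
        rw [intervalIntegral.integral_comp_add_right (fun x => x⁻¹),
          integral_inv_of_pos (by rwa [zero_add]) (by positivity), zero_add]
    _ ≤ ∫ θ in (0 : ℝ)..2 * π, ‖1 - r * Complex.exp (θ * I)‖⁻¹ := by
        refine intervalIntegral.integral_mono_on (by positivity) ?_ ?_ fun θ hθ => ?_
        · refine ((continuous_add_const (1 - r)).continuousOn.inv₀ fun θ hθ => ?_)
            |>.intervalIntegrable
          rw [Set.uIcc_of_le (by positivity)] at hθ
          exact (show 0 < θ + (1 - r) by linarith [hθ.1]).ne'
        · exact ((by fun_prop : Continuous fun θ : ℝ => ‖1 - r * Complex.exp (θ * I)‖).inv₀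
            fun θ => (norm_one_sub_ofReal_mul_exp_pos hr0 hr1).ne').intervalIntegrable _ _
        · exact inv_anti₀ (norm_one_sub_ofReal_mul_exp_pos hr0 hr1) <| by
            linarith [norm_one_sub_ofReal_mul_exp_le (θ := θ) hr0 hr1.le, abs_of_nonneg hθ.1]

theorem tendsto_integral_inv_norm_one_sub_ofReal_mul_exp :
    Tendsto (fun r : ℝ => ∫ θ in (0 : ℝ)..2 * π, ‖1 - r * Complex.exp (θ * I)‖⁻¹) (𝓝[<] 1)
      atTop := by
  have hε : Tendsto (fun r : ℝ => 1 - r) (𝓝[<] 1) (𝓝[>] 0) := by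
    refine tendsto_nhdsWithin_of_tendsto_nhds_of_eventually_within _ ?_ ?_
    · exact ((continuous_const.sub continuous_id).tendsto' 1 0 (sub_self 1)).mono_left
        nhdsWithin_le_nhds
    · filter_upwards [self_mem_nhdsWithin] with r hr using sub_pos.2 (Set.mem_Iio.1 hr)
  have hlog : Tendsto (fun ε : ℝ => Real.log ((2 * π + ε) / ε)) (𝓝[>] 0) atTop := by
    refine Real.tendsto_log_atTop.comp ?_
    simp_rw [div_eq_mul_inv]
    refine Tendsto.pos_mul_atTop (C := 2 * π) (by positivity) ?_ tendsto_inv_nhdsGT_zero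
    exact ((continuous_const.add continuous_id).tendsto' 0 _ (add_zero _)).mono_left
      nhdsWithin_le_nhds
  refine tendsto_atTop_mono' _ ?_ (hlog.comp hε)
  filter_upwards [Ico_mem_nhdsLT zero_lt_one] with r hr
  exact log_le_integral_inv_norm_one_sub_ofReal_mul_exp hr.1 hr.2

/-- For `1 ≤ p₁ < p₂ < ∞`, the integral means of `(1-z)^{-1/p₂}` of order `p₁` are uniformly
bounded (so `(1-z)^{-1/p₂} ∈ H^{p₁}`), while the integral means of order `p₂`, i.e. the
integrals of `|1 - r e^{iθ}|^{-1}`, are unbounded as `r → 1` (so it is not in `H^{p₂}`). -/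
theorem stmt7 (p₁ p₂ : ℝ) (hp₁ : 1 ≤ p₁) (hp : p₁ < p₂) :
    (∃ M : ℝ, ∀ r ∈ Set.Ico (0 : ℝ) 1,
      (∫ θ in (0 : ℝ)..2 * Real.pi,
        ‖1 - (r : ℂ) * Complex.exp (θ * Complex.I)‖ ^ (-(p₁ / p₂))) ≤ M) ∧
    ¬ (∃ M : ℝ, ∀ r ∈ Set.Ico (0 : ℝ) 1,
      (∫ θ in (0 : ℝ)..2 * Real.pi,
        ‖1 - (r : ℂ) * Complex.exp (θ * Complex.I)‖ ^ (-(1 : ℝ))) ≤ M) := by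
  have hp₂ : 0 < p₂ := by linarith
  refine ⟨⟨_, fun r hr => integral_norm_one_sub_ofReal_mul_exp_rpow_neg_le
    (div_nonneg (by linarith) hp₂.le) ((div_lt_one hp₂).2 hp) hr.1 hr.2⟩, ?_⟩
  rintro ⟨M, hM⟩
  simp_rw [Real.rpow_neg_one] at hM
  obtain ⟨r, hMr, hr⟩ :=
    ((tendsto_integral_inv_norm_one_sub_ofReal_mul_exp.eventually_gt_atTop M).and
      (Ico_mem_nhdsLT zero_lt_one)).exists
  exact (hM r hr).not_gt hMr
end
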